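/- Let t > 0, let μ be a probability measure on ℝ, and let z ∈ ℂ with Im z > 2√t. Then the map Φ(w) = z + t·G_μ(w) maps the half-plane {w ∈ ℂ : Im w > Im(z)/2} into itself, and on this half-plane it is a strict contraction: |Φ(w) − Φ(w')| ≤ (4t/Im(z)²)·|w − w'| for all w, w' with Im w > Im(z)/2 and Im w' > Im(z)/2, where 4t/Im(z)² < 1. -/

import Mathlib

/-!
Every kernel `x ↦ (w - x)⁻¹` with `Im w > 0` is bounded by `1 / Im w`, and the difference of two
such kernels is `(w' - w) / ((w - x)(w' - x))`. Integrating against a probability measure gives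
`‖G_μ w‖ ≤ 1 / Im w` and `‖G_μ w - G_μ w'‖ ≤ ‖w - w'‖ / (Im w · Im w')`. On `{Im w > Im z / 2}`
these read `|Im (t G_μ w)| ≤ 2t / Im z < Im z / 2` and a Lipschitz constant `4t / Im(z)²`, both
controlled by `4t < Im(z)²`, i.e. `Im z > 2√t`.
-/

open MeasureTheory

/-- The Cauchy transform of a measure `μ` on `ℝ`: `G_μ(z) = ∫ (z - x)⁻¹ dμ(x)`. -/
noncomputable def cauchyTransform (μ : Measure ℝ) (z : ℂ) : ℂ :=
  ∫ x, (z - (x : ℂ))⁻¹ ∂μ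

section Kernel

variable {w w' : ℂ}

lemma im_le_norm_sub_ofReal (w : ℂ) (x : ℝ) : w.im ≤ ‖w - x‖ := by
  simpa using Complex.im_le_norm (w - x)

lemma sub_ofReal_ne_zero (hw : 0 < w.im) (x : ℝ) : w - x ≠ 0 :=
  norm_pos_iff.mp (hw.trans_le (im_le_norm_sub_ofReal w x))

lemma norm_inv_sub_ofReal_le (hw : 0 < w.im) (x : ℝ) : ‖(w - x)⁻¹‖ ≤ w.im⁻¹ := by
  rw [norm_inv]
  exact inv_anti₀ hw (im_le_norm_sub_ofReal w x)

lemma norm_inv_sub_ofReal_sub_inv_le (hw : 0 < w.im) (hw' : 0 < w'.im) (x : ℝ) :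
    ‖(w - x)⁻¹ - (w' - x)⁻¹‖ ≤ ‖w - w'‖ / (w.im * w'.im) := by
  rw [inv_sub_inv (sub_ofReal_ne_zero hw x) (sub_ofReal_ne_zero hw' x), norm_div, norm_mul,
    sub_sub_sub_cancel_right, norm_sub_rev]
  gcongr <;> exact im_le_norm_sub_ofReal _ x

lemma integrable_inv_sub_ofReal (μ : Measure ℝ) [IsFiniteMeasure μ] (hw : 0 < w.im) :
    Integrable (fun x : ℝ => (w - x)⁻¹) μ :=
  (integrable_const w.im⁻¹).mono'
    ((continuous_const.sub Complex.continuous_ofReal).inv₀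
      (sub_ofReal_ne_zero hw)).aestronglyMeasurable
    (ae_of_all _ (norm_inv_sub_ofReal_le hw))

end Kernel

section CauchyTransform

variable (μ : Measure ℝ) [IsProbabilityMeasure μ] {w w' : ℂ}

lemma norm_cauchyTransform_le (hw : 0 < w.im) : ‖cauchyTransform μ w‖ ≤ w.im⁻¹ := by
  simpa [cauchyTransform] using
    norm_integral_le_of_norm_le_const (μ := μ) (ae_of_all _ (norm_inv_sub_ofReal_le hw))

lemma norm_cauchyTransform_sub_le (hw : 0 < w.im) (hw' : 0 < w'.im) :
    ‖cauchyTransform μ w - cauchyTransform μ w'‖ ≤ ‖w - w'‖ / (w.im * w'.im) := by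
  rw [cauchyTransform, cauchyTransform, ← integral_sub (integrable_inv_sub_ofReal μ hw)
    (integrable_inv_sub_ofReal μ hw')]
  simpa using norm_integral_le_of_norm_le_const (μ := μ)
    (ae_of_all _ (norm_inv_sub_ofReal_sub_inv_le hw hw'))

end CauchyTransform

/-- For `t > 0`, a probability measure `μ` and `Im z > 2√t`, the map `Φ(w) = z + t G_μ(w)`
maps `{Im w > Im z / 2}` into itself and is a strict contraction there, with constant
`4t/Im(z)² < 1`. -/
theorem contraction_map (t : ℝ) (ht : 0 < t) (μ : Measure ℝ) [IsProbabilityMeasure μ]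
    (z : ℂ) (hz : 2 * Real.sqrt t < z.im) :
    (∀ w : ℂ, z.im / 2 < w.im → z.im / 2 < (z + (t : ℂ) * cauchyTransform μ w).im) ∧
    (∀ w w' : ℂ, z.im / 2 < w.im → z.im / 2 < w'.im →
      ‖(z + (t : ℂ) * cauchyTransform μ w) - (z + (t : ℂ) * cauchyTransform μ w')‖ ≤
        (4 * t / z.im ^ 2) * ‖w - w'‖) ∧
    4 * t / z.im ^ 2 < 1 := by
  have hc : 0 < z.im / 2 := by linarith [Real.sqrt_nonneg t]
  have hzim : 0 < z.im := by linarith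
  have h4t : 4 * t < z.im ^ 2 := by
    nlinarith [Real.sq_sqrt ht.le, Real.sqrt_nonneg t]
  refine ⟨fun w hw => ?_, fun w w' hw hw' => ?_, (div_lt_one (by positivity)).mpr h4t⟩
  · have hG : |(cauchyTransform μ w).im| ≤ (z.im / 2)⁻¹ :=
      (Complex.abs_im_le_norm _).trans
        ((norm_cauchyTransform_le μ (hc.trans hw)).trans (inv_anti₀ hc hw.le))
    have htG : t * (z.im / 2)⁻¹ < z.im / 2 := by
      rw [← div_eq_mul_inv, div_lt_iff₀ hc]; linarith
    simp only [Complex.add_im, Complex.im_ofReal_mul]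
    nlinarith [neg_abs_le (cauchyTransform μ w).im]
  · calc ‖(z + (t : ℂ) * cauchyTransform μ w) - (z + (t : ℂ) * cauchyTransform μ w')‖
        = t * ‖cauchyTransform μ w - cauchyTransform μ w'‖ := by
          rw [add_sub_add_left_eq_sub, ← mul_sub, norm_mul, Complex.norm_real,
            Real.norm_of_nonneg ht.le]
      _ ≤ t * (‖w - w'‖ / (z.im / 2 * (z.im / 2))) := by
          gcongr
          exact (norm_cauchyTransform_sub_le μ (hc.trans hw) (hc.trans hw')).trans
            (by gcongr; linarith)
      _ = 4 * t / z.im ^ 2 * ‖w - w'‖ := by ring
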